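/- The multi-player reach-avoid Markov game has a pure Nash equilibrium: there exists a joint local policy (π_1*,…,π_N*) in which every π_i* is deterministic (each π_i*(s,t) is a point mass on a single action) and such that for every player i and every (possibly stochastic) local policy π_i, F(π_i*, π_{−i}*) ≥ F(π_i, π_{−i}*). -/
import Mathlib

open Finset

/-- Target-membership indicator `X_i`. -/
def Xind {S : Type} [DecidableEq S] (Targ : Finset S) (s : S) : ℝ :=
  if s ∈ Targ then 1 else 0

/-- Pairwise avoidance indicator `Y_{ij}`. -/
def Yind {N : ℕ} {S : Type} [DecidableEq S] (i j : Fin N) (si sj : S) : ℝ :=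
  if i = j ∨ si ≠ sj then 1 else 0

/-- Kernel induced by a local policy: `y_i^{π_i}(s,s',t) = ∑_a P_i(s'|s,a) π_i(s,t)(a)`. -/
noncomputable def ker {N : ℕ} {S : Type} {A : Fin N → Type} [∀ i, Fintype (A i)]
    (P : ∀ i, S → A i → S → ℝ) (pol : ∀ i, S → ℕ → A i → ℝ)
    (i : Fin N) (s s' : S) (t : ℕ) : ℝ :=
  ∑ a : A i, P i s a s' * pol i s t a

/-- Reach-avoid indicator of a joint trajectory `τ`, horizon `T`. -/
noncomputable def RA {S : Type} [DecidableEq S] (N T : ℕ)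
    (Targ : Fin N → Finset S) (τ : Fin N → Fin (T + 1) → S) : ℝ :=
  (∏ i, Xind (Targ i) (τ i (Fin.last T))) *
    ∏ t : Fin (T + 1), ∏ i, ∏ j, Yind i j (τ i t) (τ j t)

/-- Multi-player reach-avoid objective `F(π_1,…,π_N)`. -/
noncomputable def Fobj (N T : ℕ) {S : Type} [Fintype S] [DecidableEq S]
    {A : Fin N → Type} [∀ i, Fintype (A i)]
    (Targ : Fin N → Finset S) (p : Fin N → S → ℝ)
    (P : ∀ i, S → A i → S → ℝ) (pol : ∀ i, S → ℕ → A i → ℝ) : ℝ :=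
  ∑ τ : Fin N → Fin (T + 1) → S,
    RA N T Targ τ *
      ∏ i, (p i (τ i 0) * ∏ t : Fin T, ker P pol i (τ i t.castSucc) (τ i t.succ) (t : ℕ))

/-- Deterministic policy given by a choice table `d` on `S × Fin T`. -/
noncomputable def detPol {T : ℕ} {S : Type} {B : Type} [DecidableEq B] [Nonempty B]
    (d : S × Fin T → B) : S → ℕ → B → ℝ :=
  fun s t a =>
    if h : t < T then (if a = d (s, ⟨t, h⟩) then 1 else 0)
    else if a = Classical.arbitrary B then 1 else 0

lemma ker_detPol {N T : ℕ} {S : Type} {A : Fin N → Type} [∀ i, Fintype (A i)]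
    (P : ∀ i, S → A i → S → ℝ) (pol : ∀ i, S → ℕ → A i → ℝ)
    (i : Fin N) [DecidableEq (A i)] [Nonempty (A i)]
    (d : S × Fin T → A i) (s s' : S) (t : Fin T) :
    ker P (Function.update pol i (detPol d)) i s s' (t : ℕ) = P i s (d (s, t)) s' := by
  unfold ker detPol
  rw [Function.update_self]
  have ht : (t : ℕ) < T := t.isLt
  simp only [ht, dif_pos, Fin.eta, mul_ite, mul_one, mul_zero, Finset.sum_ite_eq',
    Finset.mem_univ, if_pos]

/-- The key multilinear expansion of a single player's trajectory factor. -/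
lemma player_expand {N T : ℕ} {S : Type} [Fintype S] [DecidableEq S]
    {A : Fin N → Type} [∀ i, Fintype (A i)]
    (P : ∀ i, S → A i → S → ℝ) (i : Fin N) [DecidableEq (A i)]
    (poli : S → ℕ → A i → ℝ) (h1 : ∀ s t, t < T → ∑ a, poli s t a = 1)
    (σ : Fin (T + 1) → S) :
    (∏ t : Fin T, ∑ a, P i (σ t.castSucc) a (σ t.succ) * poli (σ t.castSucc) (t : ℕ) a)
      = ∑ d : S × Fin T → A i,
          (∏ q : S × Fin T, poli q.1 (q.2 : ℕ) (d q)) *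
            ∏ t : Fin T, P i (σ t.castSucc) (d (σ t.castSucc, t)) (σ t.succ) := by
  have key : ∀ d : S × Fin T → A i,
      (∏ q : S × Fin T, poli q.1 (q.2 : ℕ) (d q)) *
          (∏ t : Fin T, P i (σ t.castSucc) (d (σ t.castSucc, t)) (σ t.succ))
        = ∏ q : S × Fin T,
            (poli q.1 (q.2 : ℕ) (d q) *
              (if q.1 = σ q.2.castSucc then P i q.1 (d q) (σ q.2.succ) else 1)) := by
    intro d
    rw [Finset.prod_mul_distrib]
    congr 1
    rw [Fintype.prod_prod_type]
    rw [Finset.prod_comm]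
    apply Finset.prod_congr rfl
    intro t _
    rw [Finset.prod_ite_eq' Finset.univ (σ t.castSucc)
      (fun s => P i s (d (s, t)) (σ t.succ))]
    simp
  rw [Finset.sum_congr rfl fun d _ => key d]
  have expand := Finset.prod_univ_sum (fun _ : S × Fin T => (Finset.univ : Finset (A i)))
    (fun q a => poli q.1 (q.2 : ℕ) a *
      if q.1 = σ q.2.castSucc then P i q.1 a (σ q.2.succ) else 1)
  rw [Fintype.piFinset_univ] at expand
  rw [← expand, Fintype.prod_prod_type, Finset.prod_comm]
  apply Finset.prod_congr rfl
  intro t _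
  symm
  rw [Finset.prod_eq_single_of_mem (σ t.castSucc) (Finset.mem_univ _)
    (fun s _ hs => by
      simp only [if_neg hs, mul_one]
      exact h1 s (t : ℕ) t.isLt)]
  simp only [if_pos rfl]
  exact Finset.sum_congr rfl fun a _ => by simp [mul_comm]

/-- Linearity of `Fobj` in one player's policy: expansion over deterministic tables. -/
lemma Fobj_update_expand (N T : ℕ) {S : Type} [Fintype S] [DecidableEq S]
    {A : Fin N → Type} [∀ i, Fintype (A i)]
    (Targ : Fin N → Finset S) (p : Fin N → S → ℝ)
    (P : ∀ i, S → A i → S → ℝ) (pol : ∀ i, S → ℕ → A i → ℝ)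
    (i : Fin N) [DecidableEq (A i)] [Nonempty (A i)]
    (poli : S → ℕ → A i → ℝ) (h1 : ∀ s t, t < T → ∑ a, poli s t a = 1) :
    Fobj N T Targ p P (Function.update pol i poli)
      = ∑ d : S × Fin T → A i,
          (∏ q : S × Fin T, poli q.1 (q.2 : ℕ) (d q)) *
            Fobj N T Targ p P (Function.update pol i (detPol d)) := by
  unfold Fobj
  have swap : ∀ d : S × Fin T → A i,
      (∏ q : S × Fin T, poli q.1 (q.2 : ℕ) (d q)) *
        (∑ τ : Fin N → Fin (T + 1) → S, RA N T Targ τ *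
          ∏ j, (p j (τ j 0) * ∏ t : Fin T,
            ker P (Function.update pol i (detPol d)) j (τ j t.castSucc) (τ j t.succ) (t : ℕ)))
      = ∑ τ : Fin N → Fin (T + 1) → S,
          (∏ q : S × Fin T, poli q.1 (q.2 : ℕ) (d q)) *
            (RA N T Targ τ * ∏ j, (p j (τ j 0) * ∏ t : Fin T,
              ker P (Function.update pol i (detPol d)) j (τ j t.castSucc) (τ j t.succ) (t : ℕ))) :=
    fun d => Finset.mul_sum _ _ _
  rw [Finset.sum_congr rfl fun d _ => swap d, Finset.sum_comm]
  apply Finset.sum_congr rfl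
  intro τ _
  -- pull out the factor of player i
  have split : ∀ q : ∀ j, S → ℕ → A j → ℝ,
      (∏ j, (p j (τ j 0) * ∏ t : Fin T,
          ker P q j (τ j t.castSucc) (τ j t.succ) (t : ℕ)))
        = (p i (τ i 0) * ∏ t : Fin T,
            ker P q i (τ i t.castSucc) (τ i t.succ) (t : ℕ)) *
          ∏ j ∈ Finset.univ.erase i, (p j (τ j 0) * ∏ t : Fin T,
            ker P q j (τ j t.castSucc) (τ j t.succ) (t : ℕ)) :=
    fun q => (Finset.mul_prod_erase Finset.univ _ (Finset.mem_univ i)).symm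
  have hker_other : ∀ (r : S → ℕ → A i → ℝ), ∀ j ∈ Finset.univ.erase i,
      (p j (τ j 0) * ∏ t : Fin T,
        ker P (Function.update pol i r) j (τ j t.castSucc) (τ j t.succ) (t : ℕ))
      = (p j (τ j 0) * ∏ t : Fin T,
        ker P pol j (τ j t.castSucc) (τ j t.succ) (t : ℕ)) := by
    intro r j hj
    have hji : j ≠ i := (Finset.mem_erase.mp hj).1
    congr 1
    apply Finset.prod_congr rfl
    intro t _
    unfold ker
    rw [Function.update_of_ne hji]
  set C := ∏ j ∈ Finset.univ.erase i, (p j (τ j 0) * ∏ t : Fin T,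
      ker P pol j (τ j t.castSucc) (τ j t.succ) (t : ℕ)) with hC
  rw [split, Finset.prod_congr rfl (hker_other poli)]
  have lhs_ker : (∏ t : Fin T,
      ker P (Function.update pol i poli) i (τ i t.castSucc) (τ i t.succ) (t : ℕ))
      = ∏ t : Fin T, ∑ a, P i (τ i t.castSucc) a (τ i t.succ) * poli (τ i t.castSucc) (t : ℕ) a := by
    apply Finset.prod_congr rfl
    intro t _
    unfold ker
    rw [Function.update_self]
  rw [lhs_ker, player_expand P i poli h1 (τ i)]
  rw [Finset.mul_sum, Finset.sum_mul, Finset.mul_sum]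
  apply Finset.sum_congr rfl
  intro d _
  rw [split, Finset.prod_congr rfl (hker_other (detPol d)), ← hC]
  rw [Finset.prod_congr rfl fun t _ => ker_detPol P pol i d (τ i t.castSucc) (τ i t.succ) t]
  ring

/-- **Existence of a pure Nash equilibrium.** The multi-player reach-avoid
Markov game (an identical-interest Markov potential game with potential `F`)
has a pure Nash equilibrium: a joint local policy in which every player's
policy is deterministic (a point mass at every state-time pair) and from
which no player can improve `F` by a unilateral deviation to any (possibly
stochastic) local policy. -/
theorem exists_pure_nash_equilibrium (N T : ℕ) {S : Type}
    [Fintype S] [DecidableEq S] [Nonempty S]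
    {A : Fin N → Type} [∀ i, Fintype (A i)] [∀ i, DecidableEq (A i)]
    [∀ i, Nonempty (A i)]
    (Targ : Fin N → Finset S)
    (p : Fin N → S → ℝ) (hp0 : ∀ i s, 0 ≤ p i s) (hp1 : ∀ i, ∑ s, p i s = 1)
    (P : ∀ i, S → A i → S → ℝ)
    (hP0 : ∀ i s a s', 0 ≤ P i s a s') (hP1 : ∀ i s a, ∑ s', P i s a s' = 1) :
    ∃ polStar : ∀ i, S → ℕ → A i → ℝ,
      (∀ i s t, ∃ a : A i, ∀ a', polStar i s t a' = if a' = a then 1 else 0) ∧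
      ∀ i : Fin N, ∀ poli : S → ℕ → A i → ℝ,
        (∀ s t a, 0 ≤ poli s t a) → (∀ s t, t < T → ∑ a, poli s t a = 1) →
        Fobj N T Targ p P (Function.update polStar i poli) ≤
          Fobj N T Targ p P polStar := by
  obtain ⟨g, hg⟩ := Finite.exists_max
    (fun g : ∀ i, S × Fin T → A i => Fobj N T Targ p P (fun i => detPol (g i)))
  refine ⟨fun i => detPol (g i), ?_, ?_⟩
  · intro i s t
    by_cases h : t < T
    · exact ⟨g i (s, ⟨t, h⟩), fun a' => by simp [detPol, h]⟩
    · exact ⟨Classical.arbitrary (A i), fun a' => by simp [detPol, h]⟩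
  · intro i poli h0 h1
    rw [Fobj_update_expand N T Targ p P (fun i => detPol (g i)) i poli h1]
    have hsum : ∑ d : S × Fin T → A i, ∏ q : S × Fin T, poli q.1 (q.2 : ℕ) (d q) = 1 := by
      rw [← Fintype.piFinset_univ, ← Finset.prod_univ_sum]
      exact Finset.prod_eq_one fun q _ => h1 q.1 (q.2 : ℕ) q.2.isLt
    calc ∑ d : S × Fin T → A i,
          (∏ q : S × Fin T, poli q.1 (q.2 : ℕ) (d q)) *
            Fobj N T Targ p P (Function.update (fun i => detPol (g i)) i (detPol d))
        ≤ ∑ d : S × Fin T → A i,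
          (∏ q : S × Fin T, poli q.1 (q.2 : ℕ) (d q)) *
            Fobj N T Targ p P (fun i => detPol (g i)) := by
          apply Finset.sum_le_sum
          intro d _
          apply mul_le_mul_of_nonneg_left _
            (Finset.prod_nonneg fun q _ => h0 q.1 (q.2 : ℕ) (d q))
          have hupd : Function.update (fun i => detPol (g i)) i (detPol d)
              = fun j => detPol ((Function.update g i d) j) := by
            funext j
            by_cases hji : j = i
            · subst hji; simp
            · simp [Function.update_of_ne hji]
          rw [hupd]
          exact hg (Function.update g i d)
      _ = Fobj N T Targ p P (fun i => detPol (g i)) := by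
          rw [← Finset.sum_mul, hsum, one_mul]
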